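/- Let n ≥ 2, γ > 0, p ∈ ℝ, let 𝓛₀ = γ·(Λ_p − 𝓘) be the depolarizing generator, and let Φ be a trace-preserving superoperator on n×n complex matrices. Then for every t ∈ ℝ: 𝔓(exp(t·𝓛₀) ∘ Φ) = exp(t·𝓛₀) ∘ 𝔓(Φ) and 𝔓(Φ ∘ exp(t·𝓛₀)) = 𝔓(Φ) ∘ exp(t·𝓛₀). -/

import Mathlib

open Matrix

set_option synthInstance.maxHeartbeats 1000000
set_option maxHeartbeats 1000000

/-- The superoperator `X ↦ (Tr X) • I` on `n × n` complex matrices. -/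
noncomputable def traceMap (n : ℕ) :
    Matrix (Fin n) (Fin n) ℂ →ₗ[ℂ] Matrix (Fin n) (Fin n) ℂ :=
  (LinearMap.toSpanSingleton ℂ _ (1 : Matrix (Fin n) (Fin n) ℂ)).comp
    (Matrix.traceLinearMap (Fin n) ℂ ℂ)

/-- The depolarizing superoperator `Λ_p : X ↦ p • X + (1 - p) • (Tr X / n) • I`. -/
noncomputable def depol (n : ℕ) (p : ℂ) :
    Matrix (Fin n) (Fin n) ℂ →ₗ[ℂ] Matrix (Fin n) (Fin n) ℂ :=
  p • LinearMap.id + ((1 - p) / (n : ℂ)) • traceMap n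

/-- The superoperator trace `tr Φ = Σ_{k,m} (Φ E_{km})_{km}`. -/
noncomputable def supertrace (n : ℕ)
    (Φ : Matrix (Fin n) (Fin n) ℂ →ₗ[ℂ] Matrix (Fin n) (Fin n) ℂ) : ℂ :=
  ∑ k : Fin n, ∑ m : Fin n, (Φ (Matrix.single k m 1)) k m

/-- The twirling hyperprojector with respect to the full unitary group. -/
noncomputable def twirl (n : ℕ)
    (Φ : Matrix (Fin n) (Fin n) ℂ →ₗ[ℂ] Matrix (Fin n) (Fin n) ℂ) :
    Matrix (Fin n) (Fin n) ℂ →ₗ[ℂ] Matrix (Fin n) (Fin n) ℂ :=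
  ((((n : ℂ) * Matrix.trace (Φ 1) - supertrace n Φ) / ((n : ℂ) * ((n : ℂ) ^ 2 - 1))) •
      traceMap n) +
    ((((n : ℂ) * supertrace n Φ - Matrix.trace (Φ 1)) / ((n : ℂ) * ((n : ℂ) ^ 2 - 1))) •
      LinearMap.id)

attribute [local instance] Matrix.frobeniusNormedAddCommGroup Matrix.frobeniusNormedSpace

/-- The depolarizing generator `𝓛₀ = γ (Λ_p − 𝓘)` as a continuous linear map. -/
noncomputable def depolGen (n : ℕ) (γ p : ℝ) :
    Matrix (Fin n) (Fin n) ℂ →L[ℂ] Matrix (Fin n) (Fin n) ℂ :=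
  (γ : ℂ) • (LinearMap.toContinuousLinearMap (depol n (p : ℂ)) - 1)

/-- The operator-norm normed ring structure on superoperators, induced by the Frobenius norm. -/
noncomputable instance superopNormedRing (n : ℕ) :
    NormedRing (Matrix (Fin n) (Fin n) ℂ →L[ℂ] Matrix (Fin n) (Fin n) ℂ) :=
  ContinuousLinearMap.toNormedRing

/-- The corresponding normed `ℂ`-algebra structure on superoperators. -/
noncomputable instance superopNormedAlgebra (n : ℕ) :
    NormedAlgebra ℂ (Matrix (Fin n) (Fin n) ℂ →L[ℂ] Matrix (Fin n) (Fin n) ℂ) :=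
  ContinuousLinearMap.toNormedAlgebra

/-- The operator-norm topology on superoperators makes them a topological ring. -/
instance superopIsTopologicalRing (n : ℕ) :
    IsTopologicalRing (Matrix (Fin n) (Fin n) ℂ →L[ℂ] Matrix (Fin n) (Fin n) ℂ) :=
  NonUnitalSeminormedRing.toIsTopologicalRing

/- ################ auxiliary lemmas ################ -/

lemma exp_smul_idem {A : Type*} [NormedRing A] [NormedAlgebra ℂ A] [CompleteSpace A]
    (P : A) (hP : P * P = P) (x : ℂ) :
    NormedSpace.exp (x • P) = 1 + (NormedSpace.exp x - 1) • P := by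
  have hpow : ∀ k : ℕ, (x • P) ^ (k + 1) = x ^ (k + 1) • P := by
    intro k
    induction k with
    | zero => simp
    | succ k ih =>
        rw [pow_succ, ih, smul_mul_smul_comm, hP, ← pow_succ]
  have hsumC : Summable (fun k : ℕ => ((k.factorial : ℂ))⁻¹ • x ^ k) :=
    NormedSpace.expSeries_summable' (𝕂 := ℂ) x
  have hsumC' : Summable (fun k : ℕ => (((k + 1).factorial : ℂ))⁻¹ * x ^ (k + 1)) := by
    have := (summable_nat_add_iff (f := fun k : ℕ => ((k.factorial : ℂ))⁻¹ • x ^ k) 1).2 hsumC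
    simpa [smul_eq_mul] using this
  have hxsum : (∑' k : ℕ, (((k + 1).factorial : ℂ))⁻¹ * x ^ (k + 1))
      = NormedSpace.exp x - 1 := by
    simp only [NormedSpace.exp_eq_tsum ℂ]
    rw [Summable.tsum_eq_zero_add hsumC]
    simp [smul_eq_mul]
  simp only [NormedSpace.exp_eq_tsum ℂ]
  rw [Summable.tsum_eq_zero_add (NormedSpace.expSeries_summable' (𝕂 := ℂ) (x • P))]
  have hmain : (∑' k : ℕ, (((k + 1).factorial : ℂ))⁻¹ • (x • P) ^ (k + 1))
      = (∑' k : ℕ, (((k + 1).factorial : ℂ))⁻¹ * x ^ (k + 1)) • P := by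
    rw [← Summable.tsum_smul_const hsumC']
    congr 1
    funext k
    rw [hpow, smul_smul]
  rw [hmain, hxsum]
  have hx : (∑' m : ℕ, ((m.factorial : ℂ))⁻¹ * x ^ m) = NormedSpace.exp x := by
    rw [NormedSpace.exp_eq_tsum ℂ]
    simp [smul_eq_mul]
  simp [hx]

lemma traceMap_apply (n : ℕ) (X : Matrix (Fin n) (Fin n) ℂ) :
    traceMap n X = (Matrix.trace X) • 1 := rfl

lemma trace_one_fin (n : ℕ) : Matrix.trace (1 : Matrix (Fin n) (Fin n) ℂ) = (n : ℂ) := by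
  simp [Matrix.trace_one]

/-- The superoperator `E = (1 - βn)·id + β·T`. -/
noncomputable def Emap (n : ℕ) (β : ℂ) :
    Matrix (Fin n) (Fin n) ℂ →ₗ[ℂ] Matrix (Fin n) (Fin n) ℂ :=
  (1 - β * (n : ℂ)) • LinearMap.id + β • traceMap n

lemma Emap_apply (n : ℕ) (β : ℂ) (X : Matrix (Fin n) (Fin n) ℂ) :
    Emap n β X = (1 - β * (n : ℂ)) • X + β • ((Matrix.trace X) • 1) := rfl

lemma trace_E (n : ℕ) (β : ℂ) (X : Matrix (Fin n) (Fin n) ℂ) :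
    Matrix.trace (Emap n β X) = Matrix.trace X := by
  simp [Emap_apply, Matrix.trace_smul, trace_one_fin, smul_eq_mul]
  ring

lemma E_one (n : ℕ) (β : ℂ) :
    Emap n β (1 : Matrix (Fin n) (Fin n) ℂ) = 1 := by
  rw [Emap_apply, trace_one_fin, smul_smul, ← add_smul]
  rw [show (1 - β * (n:ℂ)) + β * (n:ℂ) = 1 by ring, one_smul]

lemma trace_std (n : ℕ) (k m : Fin n) :
    Matrix.trace (Matrix.single k m (1 : ℂ)) = if k = m then 1 else 0 := by
  by_cases h : k = m
  · subst h; simp [Matrix.trace_single_eq_same]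
  · simp [h, Matrix.trace_single_eq_of_ne k m (1 : ℂ) h]

lemma supertrace_comp_left (n : ℕ) (β : ℂ)
    (Φ : Matrix (Fin n) (Fin n) ℂ →ₗ[ℂ] Matrix (Fin n) (Fin n) ℂ)
    (hΦ : ∀ X, Matrix.trace (Φ X) = Matrix.trace X) :
    supertrace n (Emap n β ∘ₗ Φ) = (1 - β * (n : ℂ)) * supertrace n Φ + β * n := by
  unfold supertrace
  have key : ∀ k m : Fin n,
      ((Emap n β ∘ₗ Φ) (Matrix.single k m 1)) k m
        = (1 - β * (n : ℂ)) * (Φ (Matrix.single k m 1)) k m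
          + β * (if k = m then 1 else 0) := by
    intro k m
    rw [LinearMap.comp_apply, Emap_apply, hΦ, trace_std]
    by_cases h : k = m <;>
      simp [h, Matrix.add_apply, Matrix.smul_apply, Matrix.one_apply, smul_eq_mul]
  simp only [key]
  rw [Finset.sum_comm (f := fun k m => (1 - β * (n : ℂ)) * (Φ (Matrix.single k m 1)) k m
      + β * (if k = m then 1 else 0))]
  simp only [Finset.sum_add_distrib, ← Finset.mul_sum]
  rw [Finset.sum_comm]
  congr 1
  simp [mul_ite, Finset.sum_ite_eq, Finset.card_univ, mul_comm]

lemma supertrace_comp_right (n : ℕ) (β : ℂ)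
    (Φ : Matrix (Fin n) (Fin n) ℂ →ₗ[ℂ] Matrix (Fin n) (Fin n) ℂ)
    (hΦ : ∀ X, Matrix.trace (Φ X) = Matrix.trace X) :
    supertrace n (Φ ∘ₗ Emap n β) = (1 - β * (n : ℂ)) * supertrace n Φ + β * n := by
  unfold supertrace
  have key : ∀ k m : Fin n,
      ((Φ ∘ₗ Emap n β) (Matrix.single k m 1)) k m
        = (1 - β * (n : ℂ)) * (Φ (Matrix.single k m 1)) k m
          + β * (if k = m then (Φ 1) k m else 0) := by
    intro k m
    rw [LinearMap.comp_apply, Emap_apply, trace_std, map_add, _root_.map_smul]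
    by_cases h : k = m
    · subst h
      simp [_root_.map_smul, Matrix.add_apply, Matrix.smul_apply, smul_eq_mul]
    · simp [h, Matrix.add_apply, Matrix.smul_apply, smul_eq_mul]
  simp only [key]
  simp only [Finset.sum_add_distrib, ← Finset.mul_sum]
  congr 1
  congr 1
  simp only [Finset.sum_ite_eq, Finset.mem_univ, if_true]
  have h4 : (∑ k : Fin n, (Φ 1) k k) = Matrix.trace (Φ 1) := rfl
  rw [h4, hΦ, trace_one_fin]

lemma E_comp_traceMap (n : ℕ) (β : ℂ) : Emap n β ∘ₗ traceMap n = traceMap n := by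
  apply LinearMap.ext; intro X
  rw [LinearMap.comp_apply, traceMap_apply, _root_.map_smul, E_one, ← traceMap_apply]

lemma traceMap_comp_E (n : ℕ) (β : ℂ) : traceMap n ∘ₗ Emap n β = traceMap n := by
  apply LinearMap.ext; intro X
  rw [LinearMap.comp_apply, traceMap_apply, trace_E, ← traceMap_apply]

lemma twirl_comp_E_left (n : ℕ) (β : ℂ)
    (Φ : Matrix (Fin n) (Fin n) ℂ →ₗ[ℂ] Matrix (Fin n) (Fin n) ℂ)
    (hΦ : ∀ X, Matrix.trace (Φ X) = Matrix.trace X) :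
    twirl n (Emap n β ∘ₗ Φ) = Emap n β ∘ₗ twirl n Φ := by
  have h1 : Matrix.trace ((Emap n β ∘ₗ Φ) 1) = (n : ℂ) := by
    rw [LinearMap.comp_apply, trace_E, hΦ, trace_one_fin]
  have h2 : Matrix.trace (Φ 1) = (n : ℂ) := by rw [hΦ, trace_one_fin]
  unfold twirl
  rw [h1, h2, supertrace_comp_left n β Φ hΦ]
  rw [LinearMap.comp_add, LinearMap.comp_smul, LinearMap.comp_smul,
    E_comp_traceMap, LinearMap.comp_id]
  conv_rhs => rw [Emap]
  rw [smul_add, smul_smul, smul_smul]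
  rw [add_comm ((((n:ℂ) * supertrace n Φ - (n:ℂ)) / ((n:ℂ) * ((n:ℂ)^2 - 1)) * (1 - β * (n:ℂ))) • LinearMap.id)
      ((((n:ℂ) * supertrace n Φ - (n:ℂ)) / ((n:ℂ) * ((n:ℂ)^2 - 1)) * β) • traceMap n),
    ← add_assoc, ← add_smul]
  congr 2 <;> ring

lemma twirl_comp_E_right (n : ℕ) (β : ℂ)
    (Φ : Matrix (Fin n) (Fin n) ℂ →ₗ[ℂ] Matrix (Fin n) (Fin n) ℂ)
    (hΦ : ∀ X, Matrix.trace (Φ X) = Matrix.trace X) :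
    twirl n (Φ ∘ₗ Emap n β) = twirl n Φ ∘ₗ Emap n β := by
  have h1 : Matrix.trace ((Φ ∘ₗ Emap n β) 1) = (n : ℂ) := by
    rw [LinearMap.comp_apply, E_one, hΦ, trace_one_fin]
  have h2 : Matrix.trace (Φ 1) = (n : ℂ) := by rw [hΦ, trace_one_fin]
  unfold twirl
  rw [h1, h2, supertrace_comp_right n β Φ hΦ]
  rw [LinearMap.add_comp, LinearMap.smul_comp, LinearMap.smul_comp,
    traceMap_comp_E, LinearMap.id_comp]
  conv_rhs => rw [Emap]
  rw [smul_add, smul_smul, smul_smul]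
  rw [add_comm ((((n:ℂ) * supertrace n Φ - (n:ℂ)) / ((n:ℂ) * ((n:ℂ)^2 - 1)) * (1 - β * (n:ℂ))) • LinearMap.id)
      ((((n:ℂ) * supertrace n Φ - (n:ℂ)) / ((n:ℂ) * ((n:ℂ)^2 - 1)) * β) • traceMap n),
    ← add_assoc, ← add_smul]
  congr 2 <;> ring

/- ############ identifying exp(t 𝓛₀) ############ -/

noncomputable def Tc (n : ℕ) : Matrix (Fin n) (Fin n) ℂ →L[ℂ] Matrix (Fin n) (Fin n) ℂ :=
  LinearMap.toContinuousLinearMap (traceMap n)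

lemma Tc_mul_Tc (n : ℕ) : Tc n * Tc n = (n : ℂ) • Tc n := by
  apply ContinuousLinearMap.ext; intro X
  show Tc n (Tc n X) = (n : ℂ) • Tc n X
  have hTc : ∀ Y : Matrix (Fin n) (Fin n) ℂ, Tc n Y = (Matrix.trace Y) • 1 := fun Y => rfl
  rw [hTc, hTc, Matrix.trace_smul, trace_one_fin, smul_eq_mul, smul_smul, mul_comm]

lemma exp_depolGen_eq (n : ℕ) (hn : (n : ℂ) ≠ 0) (γ p : ℝ) (t : ℝ) :
    NormedSpace.exp ((t : ℂ) • depolGen n γ p)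
      = NormedSpace.exp ((t : ℂ) * γ * (p - 1)) • 1
        + ((1 - NormedSpace.exp ((t : ℂ) * γ * (p - 1))) / n) • Tc n := by
  set c : ℂ := (t : ℂ) * γ * (p - 1) with hc
  have hPdef : (t : ℂ) • depolGen n γ p = c • (1 - (n : ℂ)⁻¹ • Tc n) := by
    apply ContinuousLinearMap.ext; intro X
    show (t : ℂ) • ((γ : ℂ) • ((LinearMap.toContinuousLinearMap (depol n (p:ℂ)) - 1) X))
        = c • ((1 - (n : ℂ)⁻¹ • Tc n) X)
    have hd : LinearMap.toContinuousLinearMap (depol n (p:ℂ)) X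
        = (p:ℂ) • X + ((1 - (p:ℂ)) / (n:ℂ)) • ((Matrix.trace X) • 1) := rfl
    have hT : Tc n X = (Matrix.trace X) • (1 : Matrix (Fin n) (Fin n) ℂ) := rfl
    simp only [ContinuousLinearMap.sub_apply, ContinuousLinearMap.smul_apply,
      ContinuousLinearMap.one_apply, hd, hT]
    match_scalars
    · ring
    · field_simp; ring
  have hidem : (1 - (n : ℂ)⁻¹ • Tc n) * (1 - (n : ℂ)⁻¹ • Tc n)
      = 1 - (n : ℂ)⁻¹ • Tc n := by
    apply ContinuousLinearMap.ext; intro X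
    have hT : ∀ Y : Matrix (Fin n) (Fin n) ℂ, Tc n Y = (Matrix.trace Y) • 1 := fun _ => rfl
    simp only [ContinuousLinearMap.mul_apply, ContinuousLinearMap.sub_apply,
      ContinuousLinearMap.smul_apply, ContinuousLinearMap.one_apply, hT]
    rw [Matrix.trace_sub, Matrix.trace_smul, Matrix.trace_smul, trace_one_fin]
    match_scalars
    · ring
    · simp only [smul_eq_mul]; field_simp; ring
  haveI : SequentialSpace (Matrix (Fin n) (Fin n) ℂ) :=
    inferInstanceAs (SequentialSpace (Fin n → Fin n → ℂ))
  have hcs : CompleteSpace (Matrix (Fin n) (Fin n) ℂ →L[ℂ] Matrix (Fin n) (Fin n) ℂ) :=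
    inferInstance
  rw [hPdef, show NormedSpace.exp (c • (1 - (n : ℂ)⁻¹ • Tc n))
      = 1 + (NormedSpace.exp c - 1) • (1 - (n : ℂ)⁻¹ • Tc n) from
    @exp_smul_idem _ _ _ hcs _ hidem c]
  have h3 : ((1 : ℂ) - NormedSpace.exp c) / n = -((NormedSpace.exp c - 1) * (n:ℂ)⁻¹) := by
    field_simp; ring
  rw [h3]
  module

/-- the free depolarizing dynamics commutes with the twirling hyperprojector:
`𝔓(exp(t𝓛₀) ∘ Φ) = exp(t𝓛₀) ∘ 𝔓(Φ)` and `𝔓(Φ ∘ exp(t𝓛₀)) = 𝔓(Φ) ∘ exp(t𝓛₀)`. -/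
theorem twirl_exp_depolGen_comm (n : ℕ) (hn : 2 ≤ n) (γ p : ℝ) (hγ : 0 < γ)
    (Φ : Matrix (Fin n) (Fin n) ℂ →ₗ[ℂ] Matrix (Fin n) (Fin n) ℂ)
    (hΦ : ∀ X, Matrix.trace (Φ X) = Matrix.trace X) (t : ℝ) :
    twirl n ((NormedSpace.exp ((t : ℂ) • depolGen n γ p)).toLinearMap ∘ₗ Φ) =
      (NormedSpace.exp ((t : ℂ) • depolGen n γ p)).toLinearMap ∘ₗ twirl n Φ ∧
    twirl n (Φ ∘ₗ (NormedSpace.exp ((t : ℂ) • depolGen n γ p)).toLinearMap) =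
      twirl n Φ ∘ₗ (NormedSpace.exp ((t : ℂ) • depolGen n γ p)).toLinearMap := by
  have hn0 : (n : ℂ) ≠ 0 := by
    have h : (0:ℕ) < n := lt_of_lt_of_le (by norm_num) hn
    exact_mod_cast Nat.cast_ne_zero.2 h.ne'
  set e : ℂ := NormedSpace.exp ((t : ℂ) * γ * (p - 1)) with he
  set β : ℂ := (1 - e) / n with hβ
  have hα : (1 : ℂ) - β * n = e := by
    rw [hβ]; field_simp; ring
  have hform : (NormedSpace.exp ((t : ℂ) • depolGen n γ p)).toLinearMap = Emap n β := by
    rw [exp_depolGen_eq n hn0 γ p t, ← he, ← hβ]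
    apply LinearMap.ext; intro X
    show e • X + β • (Tc n X) = Emap n β X
    rw [Emap_apply, hα]
    rfl
  rw [hform]
  exact ⟨twirl_comp_E_left n β Φ hΦ, twirl_comp_E_right n β Φ hΦ⟩
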